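/- The W-type presentation of slice constructors: for a cartesian polynomial monad M, the Tree family indexed over Σ i, Cns M i is equivalent, after forgetting the constructor index, to the indexed W-type of the underlying polynomial of M; that is, the map sending a tree σ : Tree (i, c) to its underlying wellfounded tree exhibits Tree (i, c) as the fiber over c of the canonical 'iterated multiplication' map from the indexed W-type W M i to Cns M i. -/

import Mathlib

/-- A cartesian polynomial monad: an indexed container equipped with unit `eta`,
multiplication `mu`, position pairing/projections witnessing the cartesian
equivalences `Pos (eta i) ≃ Unit` and `Pos (mu c δ) ≃ Σ p, Pos (δ p)`,
compatible typing rules, and the monad laws. -/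
structure PM where
  Idx : Type
  Cns : Idx → Type
  Pos : {i : Idx} → Cns i → Type
  Typ : {i : Idx} → (c : Cns i) → Pos c → Idx
  eta : (i : Idx) → Cns i
  mu : {i : Idx} → (c : Cns i) → ((p : Pos c) → Cns (Typ c p)) → Cns i
  etaPos : (i : Idx) → Pos (eta i)
  etaTyp : ∀ (i : Idx) (p : Pos (eta i)), Typ (eta i) p = i
  etaPosUnique : ∀ (i : Idx) (p : Pos (eta i)), p = etaPos i
  muPos : ∀ {i : Idx} (c : Cns i) (δ : (p : Pos c) → Cns (Typ c p))
    (p : Pos c), Pos (δ p) → Pos (mu c δ)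
  muFst : ∀ {i : Idx} (c : Cns i) (δ : (p : Pos c) → Cns (Typ c p)),
    Pos (mu c δ) → Pos c
  muSnd : ∀ {i : Idx} (c : Cns i) (δ : (p : Pos c) → Cns (Typ c p))
    (p : Pos (mu c δ)), Pos (δ (muFst c δ p))
  muTyp : ∀ {i : Idx} (c : Cns i) (δ : (p : Pos c) → Cns (Typ c p))
    (p : Pos (mu c δ)), Typ (mu c δ) p = Typ (δ (muFst c δ p)) (muSnd c δ p)
  muFstBeta : ∀ {i : Idx} (c : Cns i) (δ : (p : Pos c) → Cns (Typ c p))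
    (p : Pos c) (q : Pos (δ p)), muFst c δ (muPos c δ p q) = p
  muSndBeta : ∀ {i : Idx} (c : Cns i) (δ : (p : Pos c) → Cns (Typ c p))
    (p : Pos c) (q : Pos (δ p)), HEq (muSnd c δ (muPos c δ p q)) q
  muPosEta : ∀ {i : Idx} (c : Cns i) (δ : (p : Pos c) → Cns (Typ c p))
    (p : Pos (mu c δ)), muPos c δ (muFst c δ p) (muSnd c δ p) = p
  unitR : ∀ {i : Idx} (c : Cns i), mu c (fun p => eta (Typ c p)) = c
  unitL : ∀ (i : Idx) (δ : (p : Pos (eta i)) → Cns (Typ (eta i) p)),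
    HEq (mu (eta i) δ) (δ (etaPos i))
  assoc : ∀ {i : Idx} (c : Cns i) (δ : (p : Pos c) → Cns (Typ c p))
    (ε : (p : Pos (mu c δ)) → Cns (Typ (mu c δ) p))
    (h : ∀ (p : Pos c) (q : Pos (δ p)), Typ (mu c δ) (muPos c δ p q) = Typ (δ p) q),
    mu (mu c δ) ε =
      mu c (fun p => mu (δ p) (fun q => cast (congrArg Cns (h p q)) (ε (muPos c δ p q))))

/-- The typing of a paired position of a multiplication. -/
theorem PM.muPosTyp (M : PM) {i : M.Idx} (c : M.Cns i)
    (δ : (p : M.Pos c) → M.Cns (M.Typ c p)) (p : M.Pos c) (q : M.Pos (δ p)) :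
    M.Typ (M.mu c δ) (M.muPos c δ p q) = M.Typ (δ p) q := by
  have h1 := M.muTyp c δ (M.muPos c δ p q)
  have h2 := M.muFstBeta c δ p q
  have h3 := M.muSndBeta c δ p q
  rw [h1]
  congr 1
  · rw [h2]
  · rw [h2]

/-- Transporting a constructor along an equality of indices, as an equality of pairs. -/
theorem PM.castSigma (M : PM) {i j : M.Idx} (h : i = j) (c : M.Cns i) :
    (⟨i, c⟩ : Σ k : M.Idx, M.Cns k) = ⟨j, cast (congrArg M.Cns h) c⟩ := by
  subst h; rfl

/-- Constructors of the slice monad `Slice M`: trees generated by the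
constructors of `M`, indexed by their iterated multiplication. -/
inductive STree (M : PM) : (Σ i : M.Idx, M.Cns i) → Type where
  | lf : (i : M.Idx) → STree M ⟨i, M.eta i⟩
  | nd : {i : M.Idx} → (c : M.Cns i) → (δ : (p : M.Pos c) → M.Cns (M.Typ c p)) →
      (ε : (p : M.Pos c) → STree M ⟨M.Typ c p, δ p⟩) → STree M ⟨i, M.mu c δ⟩

/-- Positions (internal nodes) of a tree: a leaf has no positions, a node has
its root (`here`) together with a position of the base constructor and,
recursively, a node of the tree attached there (`there`).  (This inductive
family is equivalent to `Pos (lf i) = Empty`,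
`Pos (nd c δ ε) = Unit ⊕ Σ p, Pos (ε p)`.) -/
inductive TreePos (M : PM) : ∀ {ic : Σ i : M.Idx, M.Cns i}, STree M ic → Type where
  | here : {i : M.Idx} → {c : M.Cns i} → {δ : (p : M.Pos c) → M.Cns (M.Typ c p)} →
      {ε : (p : M.Pos c) → STree M ⟨M.Typ c p, δ p⟩} → TreePos M (STree.nd c δ ε)
  | there : {i : M.Idx} → {c : M.Cns i} → {δ : (p : M.Pos c) → M.Cns (M.Typ c p)} →
      {ε : (p : M.Pos c) → STree M ⟨M.Typ c p, δ p⟩} →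
      (p : M.Pos c) → TreePos M (ε p) → TreePos M (STree.nd c δ ε)

/-- Typing of the slice monad: project the constructor occurring at a node. -/
def TreeTyp (M : PM) : ∀ {ic : Σ i : M.Idx, M.Cns i} {σ : STree M ic},
    TreePos M σ → Σ i : M.Idx, M.Cns i
  | _, _, .here (i := i) (c := c) => ⟨i, c⟩
  | _, _, .there p q => TreeTyp M q

/-- The corolla on a constructor `c`: a single node with all leaves. -/
def corolla (M : PM) {i : M.Idx} (c : M.Cns i) :
    STree M ⟨i, M.mu c (fun p => M.eta (M.Typ c p))⟩ :=
  STree.nd c (fun p => M.eta (M.Typ c p)) (fun p => STree.lf (M.Typ c p))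

/-- The unit of the slice monad: the corolla, transported along right unitality. -/
def sliceEta (M : PM) (ic : Σ i : M.Idx, M.Cns i) : STree M ic :=
  cast (congrArg (STree M) (congrArg (Sigma.mk ic.1) (M.unitR ic.2))) (corolla M ic.2)

/-- The grafting operation on trees, characterized by its recursion equations. -/
structure Graft (M : PM) where
  γ : ∀ {i : M.Idx} (c : M.Cns i), STree M ⟨i, c⟩ →
    ∀ (φ : (p : M.Pos c) → M.Cns (M.Typ c p)),
      ((p : M.Pos c) → STree M ⟨M.Typ c p, φ p⟩) → STree M ⟨i, M.mu c φ⟩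
  lf_rule : ∀ (i : M.Idx) (φ : (p : M.Pos (M.eta i)) → M.Cns (M.Typ (M.eta i) p))
    (ψ : (p : M.Pos (M.eta i)) → STree M ⟨M.Typ (M.eta i) p, φ p⟩),
    HEq (γ (M.eta i) (STree.lf i) φ ψ) (ψ (M.etaPos i))
  nd_rule : ∀ {i : M.Idx} (c : M.Cns i) (δ : (p : M.Pos c) → M.Cns (M.Typ c p))
    (ε : (p : M.Pos c) → STree M ⟨M.Typ c p, δ p⟩)
    (φ : (p : M.Pos (M.mu c δ)) → M.Cns (M.Typ (M.mu c δ) p))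
    (ψ : (p : M.Pos (M.mu c δ)) → STree M ⟨M.Typ (M.mu c δ) p, φ p⟩),
    HEq (γ (M.mu c δ) (STree.nd c δ ε) φ ψ)
      (STree.nd c
        (fun p => M.mu (δ p)
          (fun q => cast (congrArg M.Cns (M.muPosTyp c δ p q)) (φ (M.muPos c δ p q))))
        (fun p => γ (δ p) (ε p)
          (fun q => cast (congrArg M.Cns (M.muPosTyp c δ p q)) (φ (M.muPos c δ p q)))
          (fun q => cast (congrArg (STree M)
              (M.castSigma (M.muPosTyp c δ p q) (φ (M.muPos c δ p q))))
            (ψ (M.muPos c δ p q)))))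

/-- The multiplication (substitution) of the slice monad, characterized by its
recursion equations, together with a grafting operation. -/
structure SliceOps (M : PM) extends Graft M where
  smu : ∀ {ic : Σ i : M.Idx, M.Cns i} (σ : STree M ic),
    ((p : TreePos M σ) → STree M (TreeTyp M p)) → STree M ic
  smu_lf : ∀ (i : M.Idx)
    (φ : (p : TreePos M (STree.lf (M := M) i)) → STree M (TreeTyp M p)),
    smu (STree.lf i) φ = STree.lf i
  smu_nd : ∀ {i : M.Idx} (c : M.Cns i) (δ : (p : M.Pos c) → M.Cns (M.Typ c p))
    (ε : (p : M.Pos c) → STree M ⟨M.Typ c p, δ p⟩)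
    (φ : (p : TreePos M (STree.nd c δ ε)) → STree M (TreeTyp M p)),
    smu (STree.nd c δ ε) φ =
      γ c (φ TreePos.here) δ
        (fun p => smu (ε p) (fun q => φ (TreePos.there p q)))

/-- The indexed W-type of the underlying polynomial of `M`, with an additional
leaf constructor. -/
inductive WT (M : PM) : M.Idx → Type where
  | leaf : (i : M.Idx) → WT M i
  | sup : {i : M.Idx} → (c : M.Cns i) → ((p : M.Pos c) → WT M (M.Typ c p)) → WT M i

/-- The iterated multiplication map from the indexed W-type to constructors:
a leaf goes to the unit, `sup c ε` to the multiplication of `c` by the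
iterated multiplications of the subtrees. -/
def itMu (M : PM) : ∀ {i : M.Idx}, WT M i → M.Cns i
  | i, .leaf _ => M.eta i
  | _, .sup c ε => M.mu c (fun p => itMu M (ε p))

/-- The underlying wellfounded tree of a slice constructor. -/
def und (M : PM) : ∀ {ic : Σ i : M.Idx, M.Cns i}, STree M ic → WT M ic.1
  | _, .lf i => .leaf i
  | _, .nd c _ ε => .sup c (fun p => und M (ε p))

/-! A slice tree is determined by its underlying W-tree: the constructor decorations `δ` at
the nodes are forced to be the iterated multiplications of the subtrees. So rebuilding a
slice tree from a W-tree `w`, over the index `itMu M w`, inverts `und`. -/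

def WT.toSTree (M : PM) : ∀ {i : M.Idx} (w : WT M i), STree M ⟨i, itMu M w⟩
  | _, .leaf i => .lf i
  | _, .sup c ε => .nd c (fun p => itMu M (ε p)) (fun p => WT.toSTree M (ε p))

theorem itMu_und (M : PM) : ∀ {ic : Σ i : M.Idx, M.Cns i} (σ : STree M ic),
    itMu M (und M σ) = ic.2
  | _, .lf _ => rfl
  | _, .nd c _ ε => congrArg (M.mu c) (funext fun p => itMu_und M (ε p))

theorem und_toSTree (M : PM) : ∀ {i : M.Idx} (w : WT M i), und M (w.toSTree M) = w
  | _, .leaf _ => rfl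
  | _, .sup c ε => congrArg (WT.sup c) (funext fun p => und_toSTree M (ε p))

theorem STree.nd_congr_heq (M : PM) {i : M.Idx} (c : M.Cns i)
    {δ δ' : (p : M.Pos c) → M.Cns (M.Typ c p)}
    {ε : (p : M.Pos c) → STree M ⟨M.Typ c p, δ p⟩}
    {ε' : (p : M.Pos c) → STree M ⟨M.Typ c p, δ' p⟩}
    (hδ : δ = δ') (hε : ∀ p, HEq (ε p) (ε' p)) :
    HEq (STree.nd c δ ε) (STree.nd c δ' ε') := by
  subst hδ
  obtain rfl : ε = ε' := funext fun p => eq_of_heq (hε p)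
  rfl

theorem toSTree_und (M : PM) : ∀ {ic : Σ i : M.Idx, M.Cns i} (σ : STree M ic),
    HEq ((und M σ).toSTree M) σ
  | _, .lf _ => HEq.rfl
  | _, .nd c _ ε =>
    STree.nd_congr_heq M c (funext fun p => itMu_und M (ε p)) fun p => toSTree_und M (ε p)

theorem und_cast (M : PM) {i : M.Idx} {c c' : M.Cns i} (h : c = c') (σ : STree M ⟨i, c⟩) :
    und M (cast (congrArg (fun c => STree M ⟨i, c⟩) h) σ) = und M σ := by
  subst h; rfl

def undEquivFiber (M : PM) {i : M.Idx} (c : M.Cns i) :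
    STree M ⟨i, c⟩ ≃ { w : WT M i // itMu M w = c } where
  toFun σ := ⟨und M σ, itMu_und M σ⟩
  invFun w := cast (congrArg (fun c => STree M ⟨i, c⟩) w.2) (w.1.toSTree M)
  left_inv σ := eq_of_heq ((cast_heq _ _).trans (toSTree_und M σ))
  right_inv w := Subtype.ext ((und_cast M w.2 _).trans (und_toSTree M w.1))

/-- The W-type presentation of slice constructors: the map sending a tree
`σ : Tree (i, c)` to its underlying wellfounded tree exhibits `Tree (i, c)` as
the fiber over `c` of the iterated multiplication map `W M i → Cns M i`. -/
theorem slice_trees_are_wtype_fibers (M : PM) :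
    ∀ {i : M.Idx} (c : M.Cns i),
      ∃ e : STree M ⟨i, c⟩ ≃ { w : WT M i // itMu M w = c },
        ∀ σ : STree M ⟨i, c⟩, (e σ).1 = und M σ :=
  fun c => ⟨undEquivFiber M c, fun _ => rfl⟩
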